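/- Let m ≥ 1 and let λ_1,…,λ_m be complex numbers such that λ_1³,…,λ_m³ are nonzero and pairwise distinct, and set f(z) = ∏_{j=1}^m (1−λ_j³ z³) ∈ ℂ((z)). Consider the two families in ℂ((z)): S₁ = {z^{3m−3i} : i ≥ 0} ∪ {z^{−1−3i} f(z) : i ≥ 0} ∪ {z^{−3m−2−3i} f(z)² : i ≥ 0}, and S₂ = {z^{3m−3i} : 0 ≤ i ≤ m−1} ∪ {z^{−3i} f(z) : 0 ≤ i ≤ m−1} ∪ {z^{−3i−1} f(z) : 0 ≤ i ≤ m−1} ∪ {z^{−3m−i} f(z)² : i ≥ 0}. Then S₂ is linearly independent over ℂ and the ℂ-linear span of S₂ equals the ℂ-linear span of S₁. -/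

import Mathlib

/-!
Every element of `S1` and `S2` has the form `z^e f^j`, and `f` has order `0`, so such an element
has order `e`. The exponents occurring in `S2` are pairwise distinct, whence linear independence.
For the spans write `f = 1 + c₁ z³ + ⋯ + cₘ z^{3m}`, so that multiplying `z^e g` by `f` adds a
combination of `z^{e+3}g, …, z^{e+3m}g`. Expanding one factor `f` puts `S2` inside `span S1`;
conversely, a descending induction on the exponent, starting from the members of `S2` whose
exponents lie in a window of length `3m`, recovers every member of `S1`.
-/

set_option synthInstance.maxHeartbeats 400000
set_option maxHeartbeats 1000000

noncomputable section

/-- The variable `z` in the field of formal Laurent series `ℂ((z))`. -/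
def zL : LaurentSeries ℂ := HahnSeries.single 1 1

/-- `f(z) = ∏_{j=1}^m (1 - λ_j³ z³)` in `ℂ((z))`. -/
def fSing (m : ℕ) (lam : Fin m → ℂ) : LaurentSeries ℂ :=
  ∏ j : Fin m, (1 - algebraMap ℂ (LaurentSeries ℂ) (lam j ^ 3) * zL ^ 3)

/-- The basis (9.4) of `ι(U_a(X^aff_sing))`:
`z^{3m-3i}`, `z^{-1-3i}f(z)`, `z^{-3m-2-3i}f(z)²` for `i ≥ 0`. -/
def S1 (m : ℕ) (lam : Fin m → ℂ) : Set (LaurentSeries ℂ) :=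
  (Set.range fun i : ℕ => zL ^ (3 * (m : ℤ) - 3 * (i : ℤ))) ∪
    (Set.range fun i : ℕ => zL ^ (-1 - 3 * (i : ℤ)) * fSing m lam) ∪
    (Set.range fun i : ℕ => zL ^ (-3 * (m : ℤ) - 2 - 3 * (i : ℤ)) * fSing m lam ^ 2)

/-- The family (9.5): `z^{3m-3i}`, `z^{-3i}f(z)`, `z^{-3i-1}f(z)` for
`0 ≤ i ≤ m-1` and `z^{-3m-i}f(z)²` for `i ≥ 0`. -/
def S2 (m : ℕ) (lam : Fin m → ℂ) :
    (Fin m ⊕ Fin m ⊕ Fin m ⊕ ℕ) → LaurentSeries ℂ :=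
  Sum.elim (fun i => zL ^ (3 * (m : ℤ) - 3 * (i : ℤ)))
    (Sum.elim (fun i => zL ^ (-3 * (i : ℤ)) * fSing m lam)
      (Sum.elim (fun i => zL ^ (-3 * (i : ℤ) - 1) * fSing m lam)
        (fun i => zL ^ (-3 * (m : ℤ) - (i : ℤ)) * fSing m lam ^ 2)))

instance {Γ R : Type*} [AddCommMonoid Γ] [PartialOrder Γ] [IsOrderedCancelAddMonoid Γ]
    [CommSemiring R] : SMulCommClass R (HahnSeries Γ R) (HahnSeries Γ R) where
  smul_comm r x y := by
    simp only [smul_eq_mul, ← HahnSeries.C_mul_eq_smul, mul_left_comm]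

theorem HahnSeries.linearIndependent_of_injective_order {Γ R ι : Type*} [LinearOrder Γ] [Zero Γ]
    [Ring R] [NoZeroDivisors R] {x : ι → HahnSeries Γ R} (hx : ∀ i, x i ≠ 0)
    (hord : Function.Injective fun i => (x i).order) : LinearIndependent R x := by
  classical
  rw [linearIndependent_iff']
  intro s g hsum i hi
  by_contra hgi
  obtain ⟨i₀, hi₀, hmin⟩ := (s.filter (g · ≠ 0)).exists_min_image (fun j => (x j).order)
    ⟨i, Finset.mem_filter.mpr ⟨hi, hgi⟩⟩
  rw [Finset.mem_filter] at hi₀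
  have hcoeff : (∑ j ∈ s, g j • x j).coeff (x i₀).order = g i₀ * (x i₀).coeff (x i₀).order := by
    rw [HahnSeries.coeff_sum, Finset.sum_eq_single i₀]
    · rfl
    · intro j hj hji
      by_cases hgj : g j = 0
      · simp [hgj]
      have hlt : (x i₀).order < (x j).order :=
        (hmin j (Finset.mem_filter.mpr ⟨hj, hgj⟩)).lt_of_ne fun h => hji (hord h).symm
      simp [HahnSeries.coeff_eq_zero_of_lt_order hlt]
    · exact fun h => absurd hi₀.1 h
  rw [hsum, HahnSeries.coeff_zero, eq_comm] at hcoeff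
  exact mul_ne_zero hi₀.2 (mt HahnSeries.coeff_order_eq_zero.mp (hx i₀)) hcoeff

section Descent

variable {K A : Type*} [Ring K] [Ring A] [Module K A] [SMulCommClass K A A]
  {u F : A} {g : ℤ → A} {m : ℕ} {c : ℕ → K} {W : Submodule K A}

theorem mul_eq_sum_smul_shift (hg : ∀ t (k : ℕ), g t * u ^ k = g (t + k))
    (hF : F = ∑ k ∈ Finset.range (m + 1), c k • u ^ k) (t : ℤ) :
    g t * F = ∑ k ∈ Finset.range (m + 1), c k • g (t + k) := by
  simp only [hF, Finset.mul_sum, mul_smul_comm, hg]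

theorem mul_mem_of_shifts_mem (hg : ∀ t (k : ℕ), g t * u ^ k = g (t + k))
    (hF : F = ∑ k ∈ Finset.range (m + 1), c k • u ^ k) {t : ℤ} (h : ∀ k ≤ m, g (t + k) ∈ W) :
    g t * F ∈ W := by
  rw [mul_eq_sum_smul_shift hg hF]
  exact W.sum_mem fun k hk => W.smul_mem _ (h k (Nat.lt_succ_iff.mp (Finset.mem_range.mp hk)))

/-- As `F = 1 + c₁ u + ⋯ + cₘ uᵐ`, `g t` differs from `g t * F` by a combination of
`g (t + 1), …, g (t + m)`, which lets a descending induction on `t` go through. -/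
theorem mem_of_mul_mem_of_mem_Ioc (hg : ∀ t (k : ℕ), g t * u ^ k = g (t + k)) (hc0 : c 0 = 1)
    (hF : F = ∑ k ∈ Finset.range (m + 1), c k • u ^ k) (N : ℤ)
    (hmul : ∀ t ≤ N, g t * F ∈ W) (hbase : ∀ t, N < t → t ≤ N + m → g t ∈ W) :
    ∀ t ≤ N + m, g t ∈ W := by
  suffices ∀ n : ℕ, ∀ t : ℤ, N + m - t = n → g t ∈ W from
    fun t ht => this (N + m - t).toNat t (by omega)
  intro n
  induction n using Nat.strong_induction_on with
  | _ n ih =>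
  intro t hn
  rcases lt_or_ge N t with hNt | htN
  · exact hbase t hNt (by omega)
  have hsplit : g t = g t * F - ∑ k ∈ Finset.range m, c (k + 1) • g (t + (k + 1 : ℕ)) := by
    rw [mul_eq_sum_smul_shift hg hF, Finset.sum_range_succ', hc0, Nat.cast_zero, add_zero,
      one_smul, add_sub_cancel_left]
  rw [hsplit]
  refine W.sub_mem (hmul t htN) (W.sum_mem fun k hk => W.smul_mem _ ?_)
  have := Finset.mem_range.mp hk
  exact ih (n - (k + 1)) (by omega) _ (by omega)

end Descent

theorem LaurentSeries.order_ofPowerSeries_eq_zero {R : Type*} [Semiring R] {φ : PowerSeries R}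
    (h : PowerSeries.constantCoeff φ ≠ 0) : (HahnSeries.ofPowerSeries ℤ R φ).order = 0 := by
  have hcoeff : (HahnSeries.ofPowerSeries ℤ R φ).coeff 0 ≠ 0 := by
    simpa [PowerSeries.coeff_coe] using h
  refine (HahnSeries.order_le_of_coeff_ne_zero hcoeff).antisymm ?_
  refine (HahnSeries.le_order_iff_forall (HahnSeries.ne_zero_of_coeff_ne_zero hcoeff)).mpr
    fun j hj => ?_
  simp [PowerSeries.coeff_coe, hj]

theorem zL_ne_zero : zL ≠ 0 := HahnSeries.single_ne_zero one_ne_zero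

theorem zL_zpow (n : ℤ) : zL ^ n = HahnSeries.single n 1 := (RatFunc.single_zpow n).symm

theorem zL_zpow_ne_zero (n : ℤ) : zL ^ n ≠ 0 := zpow_ne_zero n zL_ne_zero

theorem order_zL_zpow (n : ℤ) : (zL ^ n).order = n := by
  rw [zL_zpow, HahnSeries.order_single one_ne_zero]

theorem order_zL_zpow_mul {x : LaurentSeries ℂ} (hx : x ≠ 0) (hx0 : x.order = 0) (n : ℤ) :
    (zL ^ n * x).order = n := by
  rw [HahnSeries.order_mul (zL_zpow_ne_zero n) hx, order_zL_zpow, hx0, add_zero]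

theorem LaurentSeries.algebraMap_apply_eq_C {R : Type*} [CommSemiring R] (a : R) :
    algebraMap R (LaurentSeries R) a = HahnSeries.C a := by
  simp [HahnSeries.algebraMap_apply']

theorem fSing_eq_ofPowerSeries (m : ℕ) (lam : Fin m → ℂ) :
    fSing m lam = HahnSeries.ofPowerSeries ℤ ℂ
      (∏ j, (1 - PowerSeries.C (lam j ^ 3) * PowerSeries.X ^ 3)) := by
  simp [fSing, zL, HahnSeries.algebraMap_apply', map_prod]

theorem order_fSing (m : ℕ) (lam : Fin m → ℂ) : (fSing m lam).order = 0 := by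
  rw [fSing_eq_ofPowerSeries]
  exact LaurentSeries.order_ofPowerSeries_eq_zero (by simp [map_prod])

theorem fSing_ne_zero (m : ℕ) (lam : Fin m → ℂ) : fSing m lam ≠ 0 := by
  refine HahnSeries.ne_zero_of_coeff_ne_zero (g := 0) ?_
  rw [fSing_eq_ofPowerSeries, PowerSeries.coeff_coe]
  simp [map_prod]

theorem exists_fSing_eq_sum (m : ℕ) (lam : Fin m → ℂ) : ∃ c : ℕ → ℂ,
    c 0 = 1 ∧ fSing m lam = ∑ k ∈ Finset.range (m + 1), c k • (zL ^ 3) ^ k := by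
  set p : Polynomial ℂ := ∏ j, (1 - Polynomial.C (lam j ^ 3) * Polynomial.X)
  have hdeg : p.natDegree < m + 1 := by
    refine Nat.lt_succ_of_le ((Polynomial.natDegree_prod_le _ _).trans ?_)
    refine (Finset.sum_le_card_nsmul _ _ 1 fun j _ => ?_).trans (by simp)
    compute_degree
  refine ⟨p.coeff, by simp [p, Polynomial.coeff_zero_eq_eval_zero, Polynomial.eval_prod], ?_⟩
  have hp : fSing m lam = p.eval₂ HahnSeries.C (zL ^ 3) := by
    simp only [fSing, p, Polynomial.eval₂_finsetProd, Polynomial.eval₂_sub, Polynomial.eval₂_one,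
      Polynomial.eval₂_mul, Polynomial.eval₂_C, Polynomial.eval₂_X,
      LaurentSeries.algebraMap_apply_eq_C]
  rw [hp, Polynomial.eval₂_eq_sum_range' _ hdeg]
  simp only [HahnSeries.C_mul_eq_smul]

theorem zL_zpow_mul_pow_three (a : ℤ) (k : ℕ) : zL ^ a * (zL ^ 3) ^ k = zL ^ (a + 3 * k) := by
  rw [zpow_add₀ zL_ne_zero, ← pow_mul]
  norm_cast

section Spans

variable {m : ℕ} {lam : Fin m → ℂ}

local notation "f" => fSing m lam

theorem zL_zpow_three_mul_mem_span_S1 {t : ℤ} (ht : t ≤ m) :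
    zL ^ (3 * t) ∈ Submodule.span ℂ (S1 m lam) :=
  Submodule.subset_span (Or.inl (Or.inl ⟨(m - t).toNat, by dsimp only; congr 1; omega⟩))

theorem zL_zpow_three_mul_sub_one_mul_mem_span_S1 {t : ℤ} (ht : t ≤ 0) :
    zL ^ (3 * t - 1) * f ∈ Submodule.span ℂ (S1 m lam) :=
  Submodule.subset_span (Or.inl (Or.inr ⟨(-t).toNat, by dsimp only; congr 2; omega⟩))

theorem zL_zpow_three_mul_sub_two_mul_sq_mem_span_S1 {t : ℤ} (ht : t ≤ -m) :
    zL ^ (3 * t - 2) * f ^ 2 ∈ Submodule.span ℂ (S1 m lam) :=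
  Submodule.subset_span (Or.inr ⟨(-t - m).toNat, by dsimp only; congr 2; omega⟩)

theorem zL_zpow_three_mul_mul_mem_span_S1 {t : ℤ} (ht : t ≤ 0) :
    zL ^ (3 * t) * f ∈ Submodule.span ℂ (S1 m lam) := by
  obtain ⟨c, -, hF⟩ := exists_fSing_eq_sum m lam
  refine mul_mem_of_shifts_mem (g := fun t => zL ^ (3 * t)) (fun t k => ?_) hF fun k hk => ?_
  · rw [zL_zpow_mul_pow_three]; ring_nf
  · exact zL_zpow_three_mul_mem_span_S1 (by omega)

theorem zL_zpow_three_mul_mem_span_S2_of_pos {t : ℤ} (ht₀ : 0 < t) (ht : t ≤ m) :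
    zL ^ (3 * t) ∈ Submodule.span ℂ (Set.range (S2 m lam)) :=
  Submodule.subset_span ⟨Sum.inl ⟨(m - t).toNat, by omega⟩,
    by simp only [S2, Sum.elim_inl]; congr 1; omega⟩

theorem zL_zpow_three_mul_mul_mem_span_S2_of_neg_lt {t : ℤ} (ht₀ : -m < t) (ht : t ≤ 0) :
    zL ^ (3 * t) * f ∈ Submodule.span ℂ (Set.range (S2 m lam)) :=
  Submodule.subset_span ⟨Sum.inr (Sum.inl ⟨(-t).toNat, by omega⟩),
    by simp only [S2, Sum.elim_inl, Sum.elim_inr]; congr 2; omega⟩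

theorem zL_zpow_three_mul_sub_one_mul_mem_span_S2_of_neg_lt {t : ℤ} (ht₀ : -m < t) (ht : t ≤ 0) :
    zL ^ (3 * t - 1) * f ∈ Submodule.span ℂ (Set.range (S2 m lam)) :=
  Submodule.subset_span ⟨Sum.inr (Sum.inr (Sum.inl ⟨(-t).toNat, by omega⟩)),
    by simp only [S2, Sum.elim_inl, Sum.elim_inr]; congr 2; omega⟩

theorem zL_zpow_mul_sq_mem_span_S2 {e : ℤ} (he : e ≤ -3 * m) :
    zL ^ e * f ^ 2 ∈ Submodule.span ℂ (Set.range (S2 m lam)) :=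
  Submodule.subset_span ⟨Sum.inr (Sum.inr (Sum.inr (-3 * m - e).toNat)),
    by simp only [S2, Sum.elim_inr]; congr 2; omega⟩

theorem zL_zpow_three_mul_mul_mem_span_S2 {t : ℤ} (ht : t ≤ 0) :
    zL ^ (3 * t) * f ∈ Submodule.span ℂ (Set.range (S2 m lam)) := by
  obtain ⟨c, hc0, hF⟩ := exists_fSing_eq_sum m lam
  refine mem_of_mul_mem_of_mem_Ioc (g := fun t => zL ^ (3 * t) * f) (fun t k => ?_) hc0 hF (-m)
    (fun t ht => ?_) (fun t ht₀ ht => zL_zpow_three_mul_mul_mem_span_S2_of_neg_lt ht₀ (by omega)) t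
    (by omega)
  · rw [mul_right_comm, zL_zpow_mul_pow_three]; ring_nf
  · rw [mul_assoc, ← sq]
    exact zL_zpow_mul_sq_mem_span_S2 (by omega)

theorem zL_zpow_three_mul_sub_one_mul_mem_span_S2 {t : ℤ} (ht : t ≤ 0) :
    zL ^ (3 * t - 1) * f ∈ Submodule.span ℂ (Set.range (S2 m lam)) := by
  obtain ⟨c, hc0, hF⟩ := exists_fSing_eq_sum m lam
  refine mem_of_mul_mem_of_mem_Ioc (g := fun t => zL ^ (3 * t - 1) * f) (fun t k => ?_) hc0 hF
    (-m) (fun t ht => ?_)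
    (fun t ht₀ ht => zL_zpow_three_mul_sub_one_mul_mem_span_S2_of_neg_lt ht₀ (by omega)) t
    (by omega)
  · rw [mul_right_comm, zL_zpow_mul_pow_three]; ring_nf
  · rw [mul_assoc, ← sq]
    exact zL_zpow_mul_sq_mem_span_S2 (by omega)

theorem zL_zpow_three_mul_mem_span_S2 {t : ℤ} (ht : t ≤ m) :
    zL ^ (3 * t) ∈ Submodule.span ℂ (Set.range (S2 m lam)) := by
  obtain ⟨c, hc0, hF⟩ := exists_fSing_eq_sum m lam
  refine mem_of_mul_mem_of_mem_Ioc (g := fun t => zL ^ (3 * t)) (fun t k => ?_) hc0 hF 0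
    (fun t ht => zL_zpow_three_mul_mul_mem_span_S2 ht)
    (fun t ht₀ ht => zL_zpow_three_mul_mem_span_S2_of_pos ht₀ (by omega)) t (by omega)
  rw [zL_zpow_mul_pow_three]; ring_nf

theorem span_S1_le_span_S2 :
    Submodule.span ℂ (S1 m lam) ≤ Submodule.span ℂ (Set.range (S2 m lam)) := by
  rw [Submodule.span_le]
  rintro _ ((⟨i, rfl⟩ | ⟨i, rfl⟩) | ⟨i, rfl⟩) <;> rw [SetLike.mem_coe]
  · convert zL_zpow_three_mul_mem_span_S2 (lam := lam) (t := m - i) (by omega) using 2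
    ring
  · convert zL_zpow_three_mul_sub_one_mul_mem_span_S2 (lam := lam) (t := -i) (by omega) using 3
    ring
  · exact zL_zpow_mul_sq_mem_span_S2 (by omega)

theorem range_S2_subset_span_S1 : Set.range (S2 m lam) ⊆ Submodule.span ℂ (S1 m lam) := by
  obtain ⟨c, -, hF⟩ := exists_fSing_eq_sum m lam
  rintro _ ⟨i | i | i | n, rfl⟩ <;> simp only [S2, Sum.elim_inl, Sum.elim_inr, SetLike.mem_coe]
  · convert zL_zpow_three_mul_mem_span_S1 (lam := lam) (t := m - i) (by omega) using 2
    ring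
  · convert zL_zpow_three_mul_mul_mem_span_S1 (lam := lam) (t := -i) (by omega) using 3
    ring
  · convert zL_zpow_three_mul_sub_one_mul_mem_span_S1 (lam := lam) (t := -i) (by omega) using 3
    ring
  obtain ⟨q, rfl | rfl | rfl⟩ : ∃ q, n = 3 * q ∨ n = 3 * q + 1 ∨ n = 3 * q + 2 := ⟨n / 3, by omega⟩
  · rw [show -3 * (m : ℤ) - (3 * q : ℕ) = 3 * (-m - q) by push_cast; ring, sq, ← mul_assoc]
    refine mul_mem_of_shifts_mem (g := fun t => zL ^ (3 * t) * f) (fun t k => ?_) hF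
      fun k hk => zL_zpow_three_mul_mul_mem_span_S1 (by omega)
    rw [mul_right_comm, zL_zpow_mul_pow_three]; ring_nf
  · rw [show -3 * (m : ℤ) - (3 * q + 1 : ℕ) = 3 * (-m - q) - 1 by push_cast; ring, sq,
      ← mul_assoc]
    refine mul_mem_of_shifts_mem (g := fun t => zL ^ (3 * t - 1) * f) (fun t k => ?_) hF
      fun k hk => zL_zpow_three_mul_sub_one_mul_mem_span_S1 (by omega)
    rw [mul_right_comm, zL_zpow_mul_pow_three]; ring_nf
  · rw [show -3 * (m : ℤ) - (3 * q + 2 : ℕ) = 3 * (-m - q) - 2 by push_cast; ring]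
    exact zL_zpow_three_mul_sub_two_mul_sq_mem_span_S1 (by omega)

theorem linearIndependent_S2 : LinearIndependent ℂ (S2 m lam) := by
  have hf := order_zL_zpow_mul (fSing_ne_zero m lam) (order_fSing m lam)
  have hf2 := order_zL_zpow_mul (pow_ne_zero 2 (fSing_ne_zero m lam))
    (by rw [HahnSeries.order_pow, order_fSing, smul_zero])
  refine HahnSeries.linearIndependent_of_injective_order (fun p => ?_) ?_
  · rcases p with i | i | i | n <;> simp [S2, zL_zpow_ne_zero, fSing_ne_zero]
  · rintro (⟨i, hi⟩ | ⟨i, hi⟩ | ⟨i, hi⟩ | n) (⟨j, hj⟩ | ⟨j, hj⟩ | ⟨j, hj⟩ | k) h <;>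
      simp only [S2, Sum.elim_inl, Sum.elim_inr, order_zL_zpow, hf, hf2, Sum.inl.injEq,
        Sum.inr.injEq, reduceCtorEq, Fin.mk.injEq] at h ⊢ <;>
      omega

end Spans

theorem S2_linearIndependent_and_span_eq_general (m : ℕ)
    (lam : Fin m → ℂ) :
    LinearIndependent ℂ (S2 m lam) ∧
      Submodule.span ℂ (Set.range (S2 m lam)) = Submodule.span ℂ (S1 m lam) :=
  ⟨linearIndependent_S2,
    le_antisymm (Submodule.span_le.mpr range_S2_subset_span_S1) span_S1_le_span_S2⟩

/-- Lemma 9.2: the family (9.5) is linearly independent and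
spans the same subspace of `ℂ((z))` as the basis (9.4) of
`ι(U_a(X^aff_sing))`. -/
theorem S2_linearIndependent_and_span_eq (m : ℕ) (hm : 1 ≤ m)
    (lam : Fin m → ℂ) (hne : ∀ j, lam j ^ 3 ≠ 0)
    (hinj : Function.Injective fun j => lam j ^ 3) :
    LinearIndependent ℂ (S2 m lam) ∧
      Submodule.span ℂ (Set.range (S2 m lam)) = Submodule.span ℂ (S1 m lam) :=
  S2_linearIndependent_and_span_eq_general m lam

end
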